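/- arXiv:1710.01947 — 5 statements merged into one kernel-verified Lean document; each statement's English description precedes it below -/
import Mathlib

section
/- For all integers p ≥ 2 and n ≥ 1, every feedback vertex set of the Sierpiński graph S_p^n has at least p^{n−1}(p−2) vertices, i.e., τ(S_p^n) ≥ p^{n−1}(p−2). -/
open SimpleGraph

/-- The Sierpinski graph `S_p^n` on vertex set `P^n`: two distinct vertices are adjacent
iff they can be written as `s i j^(d-1)` and `s j i^(d-1)`. -/
def sierpinski (p n : Nat) : SimpleGraph (Fin n → Fin p) :=
  SimpleGraph.fromRel (fun u v =>
    ∃ t : Fin n, ∃ i j : Fin p, i ≠ j ∧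
      (∀ k, k < t → u k = v k) ∧ u t = i ∧ v t = j ∧
      (∀ k, t < k → u k = j ∧ v k = i))

/-- `X` is a feedback vertex set of `G` if deleting it leaves an acyclic graph. -/
def IsFeedbackVertexSet {V : Type*} (G : SimpleGraph V) (X : Set V) : Prop :=
  (G.induce Xᶜ).IsAcyclic

/-- The feedback vertex number: the minimum cardinality of a feedback vertex set. -/
noncomputable def feedbackNumber {V : Type*} (G : SimpleGraph V) : Nat :=
  sInf {k | ∃ X : Finset V, X.card = k ∧ IsFeedbackVertexSet G ↑X}

/-- The maximum number of vertices of an induced forest of `G`. -/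
noncomputable def maxInducedForest {V : Type*} (G : SimpleGraph V) : Nat :=
  sSup {k | ∃ Y : Finset V, Y.card = k ∧ (G.induce (↑Y : Set V)).IsAcyclic}

/-!
Vertices of `S_p^{m+1}` that differ only in the last coordinate are pairwise adjacent, so
`S_p^{m+1}` is covered by `p^m` disjoint copies of `K_p`. A forest has no triangle, so each of
these cliques keeps at most two vertices outside a feedback vertex set, which therefore has
at least `p^m (p - 2)` vertices.
-/

open Finset

namespace SimpleGraph

variable {V : Type*} {G : SimpleGraph V} {s : Set V} {n : ℕ}

theorem CliqueFreeOn.card_lt_of_isClique (h : G.CliqueFreeOn s n) {t : Finset V}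
    (hts : (t : Set V) ⊆ s) (ht : G.IsClique t) : #t < n := by
  by_contra! hnt
  obtain ⟨u, hut, hu⟩ := exists_subset_card_eq hnt
  exact h ((coe_subset.2 hut).trans hts) ⟨ht.subset (coe_subset.2 hut), hu⟩

end SimpleGraph

theorem IsFeedbackVertexSet.card_le_two_of_isClique {V : Type*} {G : SimpleGraph V} {X : Set V}
    (hX : IsFeedbackVertexSet G X) {Y : Finset V} (hYX : (Y : Set V) ⊆ Xᶜ) (hY : G.IsClique Y) :
    #Y ≤ 2 :=
  Nat.le_of_lt_succ <|
    ((cliqueFree_induce_iff G Xᶜ 3).mp (hX.cliqueFree le_rfl)).card_lt_of_isClique hYX hY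

theorem sierpinski_adj_of_init_eq {p m : ℕ} {u v : Fin (m + 1) → Fin p}
    (hinit : Fin.init u = Fin.init v) (huv : u ≠ v) : (sierpinski p (m + 1)).Adj u v := by
  have hlast : u (Fin.last m) ≠ v (Fin.last m) := by
    refine fun h ↦ huv (funext fun k ↦ ?_)
    induction k using Fin.lastCases with
    | last => exact h
    | cast k => exact congrFun hinit k
  refine ⟨huv, Or.inl ⟨Fin.last m, _, _, hlast, fun k hk ↦ ?_, rfl, rfl,
    fun k hk ↦ absurd hk (Fin.le_last k).not_gt⟩⟩
  obtain ⟨k, rfl⟩ := Fin.exists_castSucc_eq.mpr hk.ne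
  exact congrFun hinit k

theorem stmt1_general (p n : Nat) (hn : 1 ≤ n)
    (X : Finset (Fin n → Fin p))
    (hX : IsFeedbackVertexSet (sierpinski p n) ↑X) :
    p ^ (n - 1) * (p - 2) ≤ X.card := by
  obtain ⟨m, rfl⟩ := Nat.exists_eq_add_of_le' hn
  have hfiber (s : Fin m → Fin p) : #{a ∈ Xᶜ | Fin.init a = s} ≤ 2 := by
    refine hX.card_le_two_of_isClique (fun a ha ↦ by simp_all) fun a ha b hb hab ↦ ?_
    simp only [coe_filter, mem_compl, Set.mem_ofPred_eq] at ha hb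
    exact sierpinski_adj_of_init_eq (ha.2.trans hb.2.symm) hab
  have hcompl : #Xᶜ ≤ 2 * p ^ m := by
    have := card_le_mul_card_image_of_maps_to (f := fun a : Fin (m + 1) → Fin p ↦ Fin.init a)
      (t := univ) (fun a _ ↦ mem_univ _) 2 fun s _ ↦ hfiber s
    simpa using this
  have htotal : #X + #Xᶜ = p ^ m * p := by
    rw [card_add_card_compl, Fintype.card_fun, Fintype.card_fin, Fintype.card_fin, pow_succ]
  rw [Nat.add_sub_cancel, Nat.mul_sub]
  omega

theorem stmt1 (p n : Nat) (hp : 2 ≤ p) (hn : 1 ≤ n)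
    (X : Finset (Fin n → Fin p))
    (hX : IsFeedbackVertexSet (sierpinski p n) ↑X) :
    p ^ (n - 1) * (p - 2) ≤ X.card :=
  stmt1_general p n hn X hX
end

section
/- For all integers p ≥ 2 and n ≥ 1, there exists a set Y of exactly 2p^{n−1} vertices of the Sierpiński graph S_p^n such that the subgraph of S_p^n induced by Y contains no cycle (is a forest). -/
open SimpleGraph

/-! Keep the vertices whose last letter is `0` or `1`. An edge `s i j^(d-1) — s j i^(d-1)` between
two such vertices has `{i, j} = {0, 1}`, so in the lexicographic order every kept vertex `w` has at
most one smaller kept neighbour: `w` must end in `1 0^(d-1)`, and the neighbour ends in `0 1^(d-1)`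
instead. The lexicographically largest vertex of a cycle would have two smaller neighbours. -/

namespace SimpleGraph

theorem isAcyclic_of_lower_neighbor_unique {V α : Type*} [LinearOrder α] (G : SimpleGraph V)
    (f : V → α) (hf : Function.Injective f)
    (h : ∀ ⦃u v w⦄, G.Adj u w → G.Adj v w → f u < f w → f v < f w → u = v) :
    G.IsAcyclic := by
  classical
  intro v c hc
  obtain ⟨x, hx, hmax⟩ := c.support.toFinset.exists_max_image f ⟨v, by simp⟩
  rw [List.mem_toFinset] at hx
  set d := c.rotate x hx
  have hd : d.IsCycle := hc.rotate hx
  have hlt : ∀ y, G.Adj y x → y ∈ d.support → f y < f x := fun y hyx hy =>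
    (hmax y (by simpa [d] using hy)).lt_of_ne (hf.ne hyx.ne)
  exact hd.snd_ne_penultimate <| h (d.adj_snd hd.not_nil).symm (d.adj_penultimate hd.not_nil)
    (hlt _ (d.adj_snd hd.not_nil).symm (d.getVert_mem_support 1))
    (hlt _ (d.adj_penultimate hd.not_nil) (d.getVert_mem_support _))

end SimpleGraph

/-- `u = s i j^(d-1)` and `v = s j i^(d-1)` with `s` of length `t`. -/
def SierpinskiEdge {p n : ℕ} (t : Fin n) (i j : Fin p) (u v : Fin n → Fin p) : Prop :=
  (∀ k, k < t → u k = v k) ∧ u t = i ∧ v t = j ∧ ∀ k, t < k → u k = j ∧ v k = i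

namespace SierpinskiEdge

variable {p n : ℕ} {t s : Fin n} {i j a b : Fin p} {u v w : Fin n → Fin p}

theorem symm (h : SierpinskiEdge t i j u v) : SierpinskiEdge t j i v u :=
  ⟨fun k hk => (h.1 k hk).symm, h.2.2.1, h.2.1, fun k hk => (h.2.2.2 k hk).symm⟩

theorem toLex_lt (h : SierpinskiEdge t i j u v) (hij : i < j) : toLex u < toLex v :=
  ⟨t, h.1, show u t < v t by rw [h.2.1, h.2.2.1]; exact hij⟩

theorem lt_of_toLex_lt (h : SierpinskiEdge t i j u v) (hij : i ≠ j) (huv : toLex u < toLex v) :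
    i < j :=
  hij.lt_or_gt.resolve_right fun hji => (h.symm.toLex_lt hji).asymm huv

theorem letters_eq_last {m : ℕ} {t : Fin (m + 1)} {u v : Fin (m + 1) → Fin p}
    (h : SierpinskiEdge t i j u v) :
    (i = u (Fin.last m) ∧ j = v (Fin.last m)) ∨
      (i = v (Fin.last m) ∧ j = u (Fin.last m)) := by
  rcases (Fin.le_last t).eq_or_lt with rfl | ht
  · exact .inl ⟨h.2.1.symm, h.2.2.1.symm⟩
  · exact .inr ⟨(h.2.2.2 _ ht).2.symm, (h.2.2.2 _ ht).1.symm⟩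

theorem left_unique (hu : SierpinskiEdge t a b u w) (hv : SierpinskiEdge s a b v w)
    (hab : a ≠ b) : u = v := by
  have hts : t = s := by
    rcases lt_trichotomy t s with hlt | heq | hgt
    · exact absurd ((hu.2.2.2 s hlt).2.symm.trans hv.2.2.1) hab
    · exact heq
    · exact absurd ((hv.2.2.2 t hgt).2.symm.trans hu.2.2.1) hab
  subst hts
  funext k
  rcases lt_trichotomy k t with hlt | rfl | hgt
  · exact (hu.1 k hlt).trans (hv.1 k hlt).symm
  · exact hu.2.1.trans hv.2.1.symm
  · exact (hu.2.2.2 k hgt).1.trans (hv.2.2.2 k hgt).1.symm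

end SierpinskiEdge

theorem sierpinski_adj_iff {p n : ℕ} {u v : Fin n → Fin p} :
    (sierpinski p n).Adj u v ↔ ∃ t i j, i ≠ j ∧ SierpinskiEdge t i j u v := by
  rw [sierpinski, fromRel_adj]
  constructor
  · rintro ⟨-, ⟨t, i, j, hij, h⟩ | ⟨t, i, j, hij, h⟩⟩
    · exact ⟨t, i, j, hij, h⟩
    · exact ⟨t, j, i, hij.symm, SierpinskiEdge.symm h⟩
  · rintro ⟨t, i, j, hij, h⟩
    refine ⟨fun huv => hij ?_, .inl ⟨t, i, j, hij, h⟩⟩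
    rw [← h.2.1, ← h.2.2.1, huv]

def lastLetterIn (p m : ℕ) (S : Finset (Fin p)) : Finset (Fin (m + 1) → Fin p) :=
  Finset.univ.filter fun u => u (Fin.last m) ∈ S

section LastLetter

variable {p m : ℕ} {a b : Fin p}

theorem card_lastLetterIn (S : Finset (Fin p)) :
    (lastLetterIn p m S).card = S.card * p ^ m := by
  have : lastLetterIn p m S =
      Fintype.piFinset fun k => if k = Fin.last m then S else Finset.univ := by
    ext u
    simp [lastLetterIn, Fin.forall_fin_succ', Fin.castSucc_ne_last]
  rw [this, Fintype.card_piFinset, Fin.prod_univ_castSucc]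
  simp [Fin.castSucc_ne_last, mul_comm]

theorem exists_sierpinskiEdge_of_toLex_lt (hab : a < b)
    {u w : Fin (m + 1) → Fin p}
    (hu : u ∈ lastLetterIn p m {a, b}) (hw : w ∈ lastLetterIn p m {a, b})
    (hadj : (sierpinski p (m + 1)).Adj u w) (hlt : toLex u < toLex w) :
    ∃ t, SierpinskiEdge t a b u w := by
  obtain ⟨t, i, j, hij, h⟩ := sierpinski_adj_iff.mp hadj
  have hij' := h.lt_of_toLex_lt hij hlt
  simp only [lastLetterIn, Finset.mem_filter, Finset.mem_univ, true_and, Finset.mem_insert,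
    Finset.mem_singleton] at hu hw
  have hletters : i = a ∧ j = b := by
    rcases h.letters_eq_last with ⟨rfl, rfl⟩ | ⟨rfl, rfl⟩ <;>
    rcases hu with hu | hu <;> rcases hw with hw | hw <;> simp_all [lt_asymm hab]
  obtain ⟨rfl, rfl⟩ := hletters
  exact ⟨t, h⟩

theorem isAcyclic_induce_lastLetterIn_pair (hab : a < b) :
    ((sierpinski p (m + 1)).induce
      (lastLetterIn p m {a, b} : Set (Fin (m + 1) → Fin p))).IsAcyclic := by
  refine isAcyclic_of_lower_neighbor_unique _ (fun u => toLex u.1)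
    (toLex.injective.comp Subtype.val_injective) ?_
  rintro ⟨u, hu⟩ ⟨v, hv⟩ ⟨w, hw⟩ huw hvw hu_lt hv_lt
  obtain ⟨t, ht⟩ := exists_sierpinskiEdge_of_toLex_lt hab hu hw huw hu_lt
  obtain ⟨s, hs⟩ := exists_sierpinskiEdge_of_toLex_lt hab hv hw hvw hv_lt
  exact Subtype.ext (ht.left_unique hs hab.ne)

end LastLetter

theorem stmt2 (p n : Nat) (hp : 2 ≤ p) (hn : 1 ≤ n) :
    ∃ Y : Finset (Fin n → Fin p), Y.card = 2 * p ^ (n - 1) ∧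
      ((sierpinski p n).induce (↑Y : Set (Fin n → Fin p))).IsAcyclic := by
  obtain ⟨m, rfl⟩ := Nat.exists_eq_add_of_le' hn
  have hab : (⟨0, by omega⟩ : Fin p) < ⟨1, by omega⟩ := Fin.mk_lt_mk.mpr one_pos
  refine ⟨lastLetterIn p m {⟨0, _⟩, ⟨1, _⟩}, ?_, isAcyclic_induce_lastLetterIn_pair hab⟩
  rw [card_lastLetterIn, Finset.card_pair hab.ne, Nat.add_sub_cancel]
end

section
/- Let p ≥ 2 and m ≥ 2 be integers and let P = {0,...,p−1}. If Y ⊆ P^{m−1} is pairable, then C(Y) ⊆ P^m is pairable and head(C(Y)) = {s·a : s ∈ head(Y), a ∈ P}. -/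
open SimpleGraph

/-- The head set of `Y ⊆ P^(r+1)`: all prefixes `h` such that `h·a ∈ Y` for some `a`. -/
def headSet (p r : Nat) (Y : Set (Fin (r+1) → Fin p)) : Set (Fin r → Fin p) :=
  {h | ∃ a : Fin p, Fin.snoc h a ∈ Y}

/-- `Y ⊆ P^(r+1)` is pairable: it can be partitioned into 2-element sets
`{h·a, h·b}` (`a ≠ b`) whose heads `h` are pairwise distinct. -/
def Pairable (p r : Nat) (Y : Set (Fin (r+1) → Fin p)) : Prop :=
  ∃ (H : Set (Fin r → Fin p)) (A B : (Fin r → Fin p) → Fin p),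
    (∀ h ∈ H, A h ≠ B h) ∧
    Y = ⋃ h ∈ H, {Fin.snoc h (A h), Fin.snoc h (B h)}

/-- The set `C(Y) ⊆ P^(r+2)` associated to a pairable set `Y ⊆ P^(r+1)`: for each
block `{h·a, h·b}` of `Y` it contains `C₁ = {h·a·a, h·a·b, h·b·a, h·b·b}` together with
`C₂ = {h·k·(k-1), h·k·(k+1) : k ∈ P \ {a,b}}` (arithmetic modulo `p`). -/
def CSet (p r : Nat) [NeZero p] (Y : Set (Fin (r+1) → Fin p)) :
    Set (Fin (r+1+1) → Fin p) :=
  {z | ∃ (h : Fin r → Fin p) (a b : Fin p), a ≠ b ∧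
      Fin.snoc h a ∈ Y ∧ Fin.snoc h b ∈ Y ∧
      ((∃ x ∈ ({a, b} : Set (Fin p)), ∃ y ∈ ({a, b} : Set (Fin p)),
          z = Fin.snoc (Fin.snoc h x) y) ∨
       (∃ k : Fin p, k ≠ a ∧ k ≠ b ∧
          (z = Fin.snoc (Fin.snoc h k) (k - 1) ∨ z = Fin.snoc (Fin.snoc h k) (k + 1))))}

/-!
Write a pairable `Y` as the union of the pairs `{h·A h, h·B h}`, `h ∈ H`. Then `C(Y)` is again
such a union, now over the heads `h·k` with `h ∈ H` and `k ∈ P` arbitrary: the pair with head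
`h·k` is `{h·k·A h, h·k·B h}` if `k ∈ {A h, B h}` and `{h·k·(k-1), h·k·(k+1)}` otherwise.
These two elements differ because a third element `k` of `P` forces `p ≥ 3`, so `2 ≠ 0`
in `ℤ/p`.
-/

section PairSet

variable {α : Type*} {r : ℕ}

def pairSet (H : Set (Fin r → α)) (A B : (Fin r → α) → α) : Set (Fin (r+1) → α) :=
  ⋃ h ∈ H, {Fin.snoc h (A h), Fin.snoc h (B h)}

theorem snoc_mem_pairSet_iff {H : Set (Fin r → α)} {A B : (Fin r → α) → α}
    {h : Fin r → α} {a : α} :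
    (Fin.snoc h a : Fin (r+1) → α) ∈ pairSet H A B ↔ h ∈ H ∧ (a = A h ∨ a = B h) := by
  simp only [pairSet, Set.mem_iUnion, Set.mem_insert_iff, Set.mem_singleton_iff,
    Fin.snoc_inj, exists_prop]
  constructor
  · rintro ⟨h', hh', ⟨rfl, rfl⟩ | ⟨rfl, rfl⟩⟩ <;> simp [hh']
  · rintro ⟨hh, rfl | rfl⟩ <;> exact ⟨h, hh, by simp⟩

theorem setOf_init_mem_eq (H : Set (Fin r → α)) :
    {w : Fin (r+1) → α | Fin.init w ∈ H} =
      {w | ∃ h ∈ H, ∃ a : α, w = Fin.snoc h a} := by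
  ext w
  constructor
  · exact fun hw => ⟨_, hw, _, (Fin.snoc_init_self w).symm⟩
  · rintro ⟨h, hh, a, rfl⟩
    simpa using hh

end PairSet

theorem headSet_pairSet {p r : ℕ} (H : Set (Fin r → Fin p))
    (A B : (Fin r → Fin p) → Fin p) :
    headSet p r (pairSet H A B) = H := by
  ext h
  simp only [headSet, Set.mem_ofPred_eq, snoc_mem_pairSet_iff]
  exact ⟨fun ⟨_, hh, _⟩ => hh, fun hh => ⟨A h, hh, Or.inl rfl⟩⟩

theorem three_le_of_ne {p : ℕ} {a b c : Fin p} (hab : a ≠ b) (hac : a ≠ c) (hbc : b ≠ c) :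
    3 ≤ p := by
  calc 3 = ({a, b, c} : Finset (Fin p)).card :=
        (Finset.card_eq_three.mpr ⟨a, b, c, hab, hac, hbc, rfl⟩).symm
    _ ≤ p := (Finset.card_le_univ _).trans (Fintype.card_fin p).le

theorem Fin.sub_one_ne_add_one {p : ℕ} [NeZero p] (hp : 3 ≤ p) (k : Fin p) :
    k - 1 ≠ k + 1 := by
  intro h
  have htwo : (1 : Fin p) + 1 = 0 := by
    have := congrArg (· - (k - 1)) h
    simp only [sub_self] at this
    rw [this]; abel
  have := congrArg Fin.val htwo
  rw [Fin.val_add, Fin.val_one', Fin.val_zero, Nat.mod_eq_of_lt (by omega : 1 < p),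
    Nat.mod_eq_of_lt (by omega : 1 + 1 < p)] at this
  omega

section Successor

variable {p r : ℕ} [NeZero p]

def pairFst (a b k : Fin p) : Fin p := if k = a ∨ k = b then a else k - 1

def pairSnd (a b k : Fin p) : Fin p := if k = a ∨ k = b then b else k + 1

theorem pairFst_ne_pairSnd {a b : Fin p} (hab : a ≠ b) (k : Fin p) :
    pairFst a b k ≠ pairSnd a b k := by
  unfold pairFst pairSnd
  split_ifs with hk
  · exact hab
  · push Not at hk
    exact Fin.sub_one_ne_add_one (three_le_of_ne hab hk.1.symm hk.2.symm) k

theorem eq_pairFst_or_eq_pairSnd_iff {a b k c : Fin p} :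
    c = pairFst a b k ∨ c = pairSnd a b k ↔
      (k = a ∨ k = b) ∧ (c = a ∨ c = b) ∨
        k ≠ a ∧ k ≠ b ∧ (c = k - 1 ∨ c = k + 1) := by
  unfold pairFst pairSnd
  split_ifs <;> tauto

theorem snoc_snoc_mem_CSet_pairSet_iff {H : Set (Fin r → Fin p)}
    {A B : (Fin r → Fin p) → Fin p} (hAB : ∀ h ∈ H, A h ≠ B h)
    {h : Fin r → Fin p} {k c : Fin p} :
    Fin.snoc (Fin.snoc h k) c ∈ CSet p r (pairSet H A B) ↔
      h ∈ H ∧ ((k = A h ∨ k = B h) ∧ (c = A h ∨ c = B h) ∨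
        k ≠ A h ∧ k ≠ B h ∧ (c = k - 1 ∨ c = k + 1)) := by
  simp only [CSet, snoc_mem_pairSet_iff, Fin.snoc_inj, Set.mem_ofPred_eq]
  constructor
  · rintro ⟨h', a, b, hab, ⟨hH, ha⟩, ⟨-, hb⟩, hz⟩
    obtain ⟨rfl, rfl⟩ | ⟨rfl, rfl⟩ : a = A h' ∧ b = B h' ∨ a = B h' ∧ b = A h' := by
      grind
    all_goals grind
  · rintro ⟨hH, hz⟩
    refine ⟨h, A h, B h, hAB h hH, ⟨hH, .inl rfl⟩, ⟨hH, .inr rfl⟩, ?_⟩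
    grind

def succFst (A B : (Fin r → Fin p) → Fin p) (w : Fin (r+1) → Fin p) : Fin p :=
  pairFst (A (Fin.init w)) (B (Fin.init w)) (w (Fin.last r))

def succSnd (A B : (Fin r → Fin p) → Fin p) (w : Fin (r+1) → Fin p) : Fin p :=
  pairSnd (A (Fin.init w)) (B (Fin.init w)) (w (Fin.last r))

theorem CSet_pairSet {H : Set (Fin r → Fin p)} {A B : (Fin r → Fin p) → Fin p}
    (hAB : ∀ h ∈ H, A h ≠ B h) :
    CSet p r (pairSet H A B) = pairSet {w | Fin.init w ∈ H} (succFst A B) (succSnd A B) := by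
  ext z
  obtain ⟨w, c, rfl⟩ : ∃ w c, z = Fin.snoc w c := ⟨_, _, (Fin.snoc_init_self z).symm⟩
  obtain ⟨h, k, rfl⟩ : ∃ h k, w = Fin.snoc h k := ⟨_, _, (Fin.snoc_init_self w).symm⟩
  rw [snoc_snoc_mem_CSet_pairSet_iff hAB, snoc_mem_pairSet_iff, succFst, succSnd,
    eq_pairFst_or_eq_pairSnd_iff]
  simp only [Set.mem_ofPred_eq, Fin.init_snoc, Fin.snoc_last]

end Successor

theorem stmt4_general (p r : Nat) [NeZero p]
    (Y : Set (Fin (r+1) → Fin p)) (hY : Pairable p r Y) :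
    Pairable p (r+1) (CSet p r Y) ∧
    headSet p (r+1) (CSet p r Y) =
      {w | ∃ h ∈ headSet p r Y, ∃ a : Fin p, w = Fin.snoc h a} := by
  obtain ⟨H, A, B, hAB, hY⟩ := hY
  replace hY : Y = pairSet H A B := hY
  subst hY
  rw [CSet_pairSet hAB, headSet_pairSet, headSet_pairSet]
  exact ⟨⟨_, _, _, fun w hw => pairFst_ne_pairSnd (hAB _ hw) _, rfl⟩, setOf_init_mem_eq H⟩

theorem stmt4 (p r : Nat) [NeZero p] (hp : 2 ≤ p)
    (Y : Set (Fin (r+1) → Fin p)) (hY : Pairable p r Y) :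
    Pairable p (r+1) (CSet p r Y) ∧
    headSet p (r+1) (CSet p r Y) =
      {w | ∃ h ∈ headSet p r Y, ∃ a : Fin p, w = Fin.snoc h a} :=
  stmt4_general p r Y hY
end

section
/- For all integers p ≥ 1 and n ≥ 0, the generalized Sierpiński triangle graph Ŝ_p^n has exactly p(p^n + 1)/2 vertices and exactly (p−1)p^{n+1}/2 edges. -/
open SimpleGraph

/-- The non-clique edges of `S_p^(n+1)`: edges `{s i j^l, s j i^l}` with `l ≥ 1`,
i.e. adjacency witnessed at a position `t` with `t < n`. -/
def nonCliqueRel (p n : Nat) (u v : Fin (n+1) → Fin p) : Prop :=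
  ∃ t : Fin (n+1), (t : Nat) < n ∧ ∃ i j : Fin p, i ≠ j ∧
    (∀ k, k < t → u k = v k) ∧ u t = i ∧ v t = j ∧
    (∀ k, t < k → u k = j ∧ v k = i)

/-- The setoid identifying the two endpoints of every non-clique edge of `S_p^(n+1)`. -/
def triSetoid (p n : Nat) : Setoid (Fin (n+1) → Fin p) :=
  Relation.EqvGen.setoid (nonCliqueRel p n)

/-- The generalized Sierpinski triangle graph: the contraction of all
non-clique edges of `S_p^(n+1)`. -/
def sierpinskiTriangle (p n : Nat) : SimpleGraph (Quotient (triSetoid p n)) where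
  Adj x y := x ≠ y ∧ ∃ u v : Fin (n+1) → Fin p,
    Quotient.mk (triSetoid p n) u = x ∧ Quotient.mk (triSetoid p n) v = y ∧
    (sierpinski p (n+1)).Adj u v
  symm := by
    constructor
    rintro x y ⟨hxy, u, v, hu, hv, h⟩
    exact ⟨hxy.symm, v, u, hv, hu, h.symm⟩
  loopless := by
    constructor
    rintro x ⟨hxx, -⟩
    exact hxx rfl

/-! Contracting the non-clique edges pairs up the vertices: a non-constant word `s i j^l`
(`l ≥ 1`) is identified exactly with `s j i^l`, while the `p` constant words stay alone, so
`2 |Ŝ_p^n| = p^(n+1) + p`. The edges that survive are the images of the clique edges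
`{s a, s b}` (`s ∈ P^n`, `a ≠ b`) of `S_p^(n+1)`, and distinct clique edges stay distinct, so
there are `p^n · C(p, 2)` of them. -/

open Finset

theorem two_mul_card_eq_card_add_card_of_card_fiber {α β : Type*} [Fintype α] [Fintype β]
    [DecidableEq β] (f : α → β) (hf : ∀ b, #{a | f a = b} = 1 ∨ #{a | f a = b} = 2) :
    2 * Fintype.card β = Fintype.card α + #{b | #{a | f a = b} = 1} := by
  rw [← card_univ (α := α),
    card_eq_sum_card_fiberwise (t := univ) (fun a _ => mem_coe.2 (mem_univ (f a))), card_filter,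
    ← sum_add_distrib, ← card_univ, mul_comm, ← smul_eq_mul, ← sum_const]
  refine sum_congr rfl fun b _ => ?_
  rcases hf b with h | h <;> simp [h]

namespace SierpinskiTriangle

variable {p n : ℕ}

theorem nonCliqueRel_iff {u v : Fin (n + 1) → Fin p} :
    nonCliqueRel p n u v ↔ ∃ t < Fin.last n, u t ≠ v t ∧ (∀ k < t, u k = v k) ∧
      ∀ k, t < k → u k = v t ∧ v k = u t := by
  simp only [nonCliqueRel, Fin.lt_def, Fin.val_last]
  constructor
  · rintro ⟨t, ht, _, _, hij, hpre, rfl, rfl, htail⟩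
    exact ⟨t, ht, hij, hpre, htail⟩
  · rintro ⟨t, ht, hne, hpre, htail⟩
    exact ⟨t, ht, u t, v t, hne, hpre, rfl, rfl, htail⟩

theorem nonCliqueRel.symm {u v : Fin (n + 1) → Fin p} (h : nonCliqueRel p n u v) :
    nonCliqueRel p n v u := by
  obtain ⟨t, ht, hne, hpre, htail⟩ := nonCliqueRel_iff.1 h
  exact nonCliqueRel_iff.2 ⟨t, ht, hne.symm, fun k hk => (hpre k hk).symm,
    fun k hk => (htail k hk).symm⟩

theorem nonCliqueRel.ne {u v : Fin (n + 1) → Fin p} (h : nonCliqueRel p n u v) : u ≠ v := by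
  obtain ⟨t, -, hne, -⟩ := nonCliqueRel_iff.1 h
  exact fun huv => hne (congrFun huv t)

theorem nonCliqueRel.unique {u v w : Fin (n + 1) → Fin p} (hv : nonCliqueRel p n u v)
    (hw : nonCliqueRel p n u w) : v = w := by
  obtain ⟨t, ht, hne, hpre, htail⟩ := nonCliqueRel_iff.1 hv
  obtain ⟨t', ht', hne', hpre', htail'⟩ := nonCliqueRel_iff.1 hw
  have hvt : u (Fin.last n) = v t := (htail _ ht).1
  have hwt : u (Fin.last n) = w t' := (htail' _ ht').1
  -- both `t` and `t'` are the last position at which `u` differs from its last letter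
  obtain rfl : t = t' := by
    by_contra htt
    rcases lt_or_gt_of_ne htt with hlt | hlt
    · exact hne' ((htail t' hlt).1.trans (hvt.symm.trans hwt))
    · exact hne ((htail' t hlt).1.trans (hwt.symm.trans hvt))
  funext k
  rcases lt_trichotomy k t with hk | rfl | hk
  · exact (hpre k hk).symm.trans (hpre' k hk)
  · exact hvt.symm.trans hwt
  · exact (htail k hk).2.trans (htail' k hk).2.symm

theorem exists_nonCliqueRel_iff {u : Fin (n + 1) → Fin p} :
    (∃ v, nonCliqueRel p n u v) ↔ ∃ k, u k ≠ u (Fin.last n) := by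
  classical
  constructor
  · rintro ⟨v, h⟩
    obtain ⟨t, ht, hne, -, htail⟩ := nonCliqueRel_iff.1 h
    exact ⟨t, fun h => hne (h.trans (htail _ ht).1)⟩
  · rintro ⟨k₀, hk₀⟩
    have hT : ({k | u k ≠ u (Fin.last n)} : Finset _).Nonempty := ⟨k₀, by simpa using hk₀⟩
    set t := ({k | u k ≠ u (Fin.last n)} : Finset _).max' hT
    have htne : u t ≠ u (Fin.last n) := by simpa using max'_mem _ hT
    have htail : ∀ k, t < k → u k = u (Fin.last n) := fun k hk => by
      by_contra h
      exact (le_max' _ k (by simpa using h)).not_gt hk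
    have ht : t < Fin.last n := (Fin.le_last t).lt_of_ne fun h => htne (congrArg u h)
    -- with `u = s i j^l` and `t` the position of `i`, the partner is `s j i^l`
    refine ⟨fun k => if k < t then u k else if k = t then u (Fin.last n) else u t,
      nonCliqueRel_iff.2 ⟨t, ht, by simpa using htne, fun k hk => by simp [hk],
        fun k hk => ?_⟩⟩
    simp [hk.not_gt, hk.ne', htail k hk]

theorem mk_eq_mk_iff {u v : Fin (n + 1) → Fin p} :
    Quotient.mk (triSetoid p n) u = Quotient.mk _ v ↔ u = v ∨ nonCliqueRel p n u v := by
  refine ⟨fun h => ?_, ?_⟩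
  · replace h : Relation.EqvGen (nonCliqueRel p n) u v := Quotient.exact h
    induction h with
    | rel _ _ h => exact .inr h
    | refl => exact .inl rfl
    | symm _ _ _ ih => rcases ih with rfl | h; exacts [.inl rfl, .inr (nonCliqueRel.symm h)]
    | trans _ _ _ _ _ ih₁ ih₂ =>
      rcases ih₁ with rfl | h₁
      · exact ih₂
      rcases ih₂ with rfl | h₂
      exacts [.inr h₁, .inl (nonCliqueRel.unique (nonCliqueRel.symm h₁) h₂)]
  · rintro (rfl | h)
    exacts [rfl, Quotient.sound (.rel _ _ h)]

open Classical in
theorem card_fiber_mk (u : Fin (n + 1) → Fin p) :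
    #{w | Quotient.mk (triSetoid p n) w = Quotient.mk _ u} =
      if ∃ k, u k ≠ u (Fin.last n) then 2 else 1 := by
  split_ifs with hu
  · obtain ⟨v, huv⟩ := exists_nonCliqueRel_iff.2 hu
    rw [← card_pair (nonCliqueRel.ne huv)]
    congr 1
    ext w
    simp only [mem_filter, mem_univ, true_and, mem_insert, mem_singleton, mk_eq_mk_iff]
    constructor
    · rintro (rfl | h)
      exacts [.inl rfl, .inr (nonCliqueRel.unique huv (nonCliqueRel.symm h)).symm]
    · rintro (rfl | rfl)
      exacts [.inl rfl, .inr (nonCliqueRel.symm huv)]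
  · rw [card_eq_one]
    refine ⟨u, ?_⟩
    ext w
    simp only [mem_filter, mem_univ, true_and, mem_singleton, mk_eq_mk_iff]
    exact ⟨fun h => h.resolve_right fun h =>
      hu (exists_nonCliqueRel_iff.1 ⟨w, nonCliqueRel.symm h⟩), .inl⟩

theorem not_nonCliqueRel_const (a : Fin p) (v : Fin (n + 1) → Fin p) :
    ¬ nonCliqueRel p n (fun _ => a) v := fun h => by
  obtain ⟨k, hk⟩ := exists_nonCliqueRel_iff.1 ⟨v, h⟩
  exact hk rfl

theorem mk_const_eq_mk_iff {u : Fin (n + 1) → Fin p} :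
    (∃ a, Quotient.mk (triSetoid p n) (fun _ => a) = Quotient.mk _ u) ↔
      ∀ k, u k = u (Fin.last n) := by
  refine ⟨fun ⟨a, h⟩ => ?_,
    fun h => ⟨u (Fin.last n), congrArg _ (funext fun k => (h k).symm)⟩⟩
  obtain rfl := (mk_eq_mk_iff.1 h).resolve_right (not_nonCliqueRel_const a u)
  exact fun _ => rfl

theorem mk_const_injective :
    Function.Injective fun a : Fin p => Quotient.mk (triSetoid p n) (fun _ => a) :=
  fun a _ h => congrFun ((mk_eq_mk_iff.1 h).resolve_right (not_nonCliqueRel_const a _)) 0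

open Classical in
theorem card_singleton_classes :
    #{c : Quotient (triSetoid p n) | #{u | Quotient.mk _ u = c} = 1} = p := by
  calc _ = #(univ.image fun a : Fin p => Quotient.mk (triSetoid p n) (fun _ => a)) := by
        congr 1
        ext c
        induction c using Quotient.ind with | _ u => ?_
        simp [card_fiber_mk, mk_const_eq_mk_iff]
    _ = p := by rw [card_image_of_injective _ mk_const_injective, card_fin]

theorem two_mul_card_quotient_triSetoid :
    2 * Nat.card (Quotient (triSetoid p n)) = p ^ (n + 1) + p := by
  classical
  rw [Nat.card_eq_fintype_card, two_mul_card_eq_card_add_card_of_card_fiber (Quotient.mk _),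
    card_singleton_classes]
  · simp
  · intro c
    induction c using Quotient.ind with | _ u => ?_
    rw [card_fiber_mk]
    split_ifs <;> simp

theorem apply_eq_of_init_eq {u v : Fin (n + 1) → Fin p} (h : Fin.init u = Fin.init v)
    {k : Fin (n + 1)} (hk : k < Fin.last n) : u k = v k := by
  simpa [Fin.init] using congrFun h (k.castPred hk.ne)

theorem not_nonCliqueRel_of_init_eq {u v : Fin (n + 1) → Fin p} (h : Fin.init u = Fin.init v) :
    ¬ nonCliqueRel p n u v := fun huv => by
  obtain ⟨t, ht, hne, -⟩ := nonCliqueRel_iff.1 huv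
  exact hne (apply_eq_of_init_eq h ht)

theorem last_eq_last_of_nonCliqueRel {u v u' v' : Fin (n + 1) → Fin p}
    (h : nonCliqueRel p n u v) (h' : nonCliqueRel p n u' v')
    (hu : Fin.init u = Fin.init u') (hv : Fin.init v = Fin.init v') :
    u (Fin.last n) = u' (Fin.last n) := by
  obtain ⟨t, ht, hne, hpre, htail⟩ := nonCliqueRel_iff.1 h
  obtain ⟨t', ht', hne', hpre', htail'⟩ := nonCliqueRel_iff.1 h'
  rcases lt_trichotomy t t' with htt | rfl | htt
  · exact absurd ((apply_eq_of_init_eq hu ht).trans ((hpre' t htt).trans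
      (apply_eq_of_init_eq hv ht).symm)) hne
  · rw [(htail _ ht).1, (htail' _ ht').1]
    exact apply_eq_of_init_eq hv ht
  · exact absurd ((apply_eq_of_init_eq hu ht').symm.trans ((hpre t' htt).trans
      (apply_eq_of_init_eq hv ht'))) hne'

theorem mk_snoc_eq_mk_snoc_iff {s : Fin n → Fin p} {a b : Fin p} :
    Quotient.mk (triSetoid p n) (Fin.snoc s a : Fin (n + 1) → Fin p) =
      Quotient.mk _ (Fin.snoc s b) ↔ a = b := by
  refine ⟨fun h => ?_, fun h => h ▸ rfl⟩
  rcases mk_eq_mk_iff.1 h with h | h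
  · simpa using congrFun h (Fin.last n)
  · exact absurd h (not_nonCliqueRel_of_init_eq (by simp))

theorem eq_of_mk_snoc_eq {s s' : Fin n → Fin p} {a a' b b' : Fin p} (hab : a ≠ b)
    (ha : Quotient.mk (triSetoid p n) (Fin.snoc s a : Fin (n + 1) → Fin p) =
      Quotient.mk _ (Fin.snoc s' a'))
    (hb : Quotient.mk (triSetoid p n) (Fin.snoc s b : Fin (n + 1) → Fin p) =
      Quotient.mk _ (Fin.snoc s' b')) : s = s' := by
  rcases mk_eq_mk_iff.1 ha with ha | ha
  · simpa using congrArg Fin.init ha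
  rcases mk_eq_mk_iff.1 hb with hb | hb
  · simpa using congrArg Fin.init hb
  exact absurd (by simpa using last_eq_last_of_nonCliqueRel ha hb (by simp) (by simp)) hab

theorem sierpinski_adj_snoc (s : Fin n → Fin p) {a b : Fin p} (hab : a ≠ b) :
    (sierpinski p (n + 1)).Adj (Fin.snoc s a) (Fin.snoc s b) := by
  rw [sierpinski, fromRel_adj]
  refine ⟨fun h => hab (by simpa using congrFun h (Fin.last n)),
    .inl ⟨Fin.last n, a, b, hab, fun k hk => apply_eq_of_init_eq (by simp) hk, by simp, by simp,
      fun k hk => absurd hk (Fin.le_last k).not_gt⟩⟩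

theorem nonCliqueRel_or_init_eq {u v : Fin (n + 1) → Fin p}
    (h : ∃ t : Fin (n + 1), ∃ i j : Fin p, i ≠ j ∧ (∀ k, k < t → u k = v k) ∧
      u t = i ∧ v t = j ∧ ∀ k, t < k → u k = j ∧ v k = i) :
    nonCliqueRel p n u v ∨ Fin.init u = Fin.init v := by
  obtain ⟨t, i, j, hij, hpre, hu, hv, htail⟩ := h
  by_cases ht : (t : ℕ) < n
  · exact .inl ⟨t, ht, i, j, hij, hpre, hu, hv, htail⟩
  · obtain rfl : t = Fin.last n := Fin.ext (by have := t.isLt; simp only [Fin.val_last]; omega)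
    exact .inr (funext fun k => hpre _ (Fin.castSucc_lt_last k))

theorem init_eq_of_adj {u v : Fin (n + 1) → Fin p} (h : (sierpinski p (n + 1)).Adj u v)
    (hne : Quotient.mk (triSetoid p n) u ≠ Quotient.mk _ v) : Fin.init u = Fin.init v := by
  rw [sierpinski, fromRel_adj] at h
  obtain ⟨-, h | h⟩ := h
  · exact (nonCliqueRel_or_init_eq h).resolve_left fun h => hne (mk_eq_mk_iff.2 (.inr h))
  · refine ((nonCliqueRel_or_init_eq h).resolve_left fun h => hne ?_).symm
    exact mk_eq_mk_iff.2 (.inr (nonCliqueRel.symm h))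

theorem mk_snoc_adj (s : Fin n → Fin p) {a b : Fin p} (hab : a ≠ b) :
    (sierpinskiTriangle p n).Adj (Quotient.mk _ (Fin.snoc s a)) (Quotient.mk _ (Fin.snoc s b)) :=
  ⟨mt mk_snoc_eq_mk_snoc_iff.1 hab, _, _, rfl, rfl, sierpinski_adj_snoc s hab⟩

def cliqueEdge (x : (Fin n → Fin p) × {z : Sym2 (Fin p) // ¬ z.IsDiag}) :
    (sierpinskiTriangle p n).edgeSet :=
  ⟨x.2.1.map fun a => Quotient.mk _ (Fin.snoc x.1 a), by
    obtain ⟨s, z, hz⟩ := x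
    induction z using Sym2.ind with | _ a b => ?_
    exact mk_snoc_adj s (mt Sym2.mk_isDiag_iff.2 hz)⟩

theorem cliqueEdge_injective : Function.Injective (cliqueEdge (p := p) (n := n)) := by
  rintro ⟨s, z, hz⟩ ⟨s', z', hz'⟩ h
  induction z, z' using Sym2.inductionOn₂ with | _ a b a' b' => ?_
  have hab : a ≠ b := mt Sym2.mk_isDiag_iff.2 hz
  simp only [cliqueEdge, Subtype.mk.injEq, Sym2.map_mk, Sym2.eq_iff] at h
  rcases h with ⟨ha, hb⟩ | ⟨ha, hb⟩ <;> obtain rfl := eq_of_mk_snoc_eq hab ha hb <;>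
    simp only [mk_snoc_eq_mk_snoc_iff] at ha hb <;> subst ha hb
  · rfl
  · simp [Sym2.eq_swap]

theorem cliqueEdge_surjective : Function.Surjective (cliqueEdge (p := p) (n := n)) := by
  rintro ⟨e, he⟩
  induction e using Sym2.ind with | _ x y => ?_
  obtain ⟨hne, u, v, rfl, rfl, hadj⟩ := (mem_edgeSet _).1 he
  have hinit := init_eq_of_adj hadj hne
  have hlast : u (Fin.last n) ≠ v (Fin.last n) := fun h => hadj.ne <| by
    rw [← Fin.snoc_init_self u, ← Fin.snoc_init_self v, hinit, h]
  refine ⟨(Fin.init u, ⟨s(u (Fin.last n), v (Fin.last n)), mt Sym2.mk_isDiag_iff.1 hlast⟩),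
    ?_⟩
  simp only [cliqueEdge, Sym2.map_mk, Subtype.mk.injEq]
  nth_rw 2 [hinit]
  simp only [Fin.snoc_init_self]

theorem card_edgeSet_sierpinskiTriangle :
    Nat.card (sierpinskiTriangle p n).edgeSet = p ^ n * p.choose 2 := by
  rw [← Nat.card_eq_of_bijective _ ⟨cliqueEdge_injective, cliqueEdge_surjective⟩,
    Nat.card_eq_fintype_card, Fintype.card_prod, Sym2.card_subtype_not_diag]
  simp

end SierpinskiTriangle

theorem stmt10_general (p n : Nat) :
    Nat.card (Quotient (triSetoid p n)) = p * (p ^ n + 1) / 2 ∧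
    Nat.card (sierpinskiTriangle p n).edgeSet = (p - 1) * p ^ (n + 1) / 2 := by
  constructor
  · have hV : p * (p ^ n + 1) = 2 * Nat.card (Quotient (triSetoid p n)) := by
      rw [SierpinskiTriangle.two_mul_card_quotient_triSetoid]
      ring
    rw [hV, Nat.mul_div_cancel_left _ two_pos]
  · rw [SierpinskiTriangle.card_edgeSet_sierpinskiTriangle, Nat.choose_two_right,
      ← Nat.mul_div_assoc _ (Nat.even_mul_pred_self p).two_dvd]
    ring_nf

theorem stmt10 (p n : Nat) (hp : 1 ≤ p) :
    Nat.card (Quotient (triSetoid p n)) = p * (p ^ n + 1) / 2 ∧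
    Nat.card (sierpinskiTriangle p n).edgeSet = (p - 1) * p ^ (n + 1) / 2 :=
  stmt10_general p n
end

section
/- For all integers n ≥ 3 and odd p ≥ 5, the maximum order of an induced forest of the generalized Sierpiński triangle graph Ŝ_p^n satisfies f(Ŝ_p^n) ≥ p^n − (p^{n−1} + p^{n−2} − 5p + 3)/8. -/
open SimpleGraph

/-!
The graph `Ŝ_p^n` contains an induced path on `p^n - 1` vertices. A Hamiltonian path of `S_p^n`
from `a^n` to `b^n` is obtained by running through the copies `c S_p^(n-1)` one after another.
An edge `{w i j^l, w j i^l}` of `S_p^n` becomes, after appending one letter, the non-clique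
edge `{w i j^(l+1), w j i^(l+1)}` of `S_p^(n+1)`, i.e. a single vertex of `Ŝ_p^n`; two such
vertices can only be adjacent in `Ŝ_p^n` when the two edges of `S_p^n` share an endpoint. So the
`p^n - 1` edges of the Hamiltonian path induce a path in `Ŝ_p^n`, and `f(Ŝ_p^n) ≥ p^n - 1`, which
beats the claimed bound since `p^(n-1) + p^(n-2) - 5p + 3 ≥ 8`.
-/

namespace SimpleGraph

lemma isAcyclic_pathGraph (n : ℕ) : (pathGraph n).IsAcyclic := by
  refine isAcyclic_iff_forall_adj_isBridge.mpr fun v w hvw => ?_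
  wlog hvw' : v.val + 1 = w.val generalizing v w
  · rw [Sym2.eq_swap]
    exact this _ _ hvw.symm ((pathGraph_adj.mp hvw).resolve_left hvw')
  rw [isBridge_iff]
  rintro ⟨q⟩
  obtain ⟨d, -, hd, hd'⟩ := q.exists_boundary_dart {x | x.val ≤ v.val}
    (show v.val ≤ v.val from le_rfl) (show ¬w.val ≤ v.val by omega)
  have hadj := d.adj
  rw [deleteEdges_adj, pathGraph_adj] at hadj
  change d.fst.val ≤ v.val at hd
  change ¬d.snd.val ≤ v.val at hd'
  have hfst : d.fst = v := Fin.ext (by omega)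
  have hsnd : d.snd = w := Fin.ext (by omega)
  exact hadj.2 (by simp [hfst, hsnd])

end SimpleGraph

lemma isAcyclic_induce_range {V W : Type*} {G : SimpleGraph V} {H : SimpleGraph W} {f : W → V}
    (hf : Function.Injective f) (hadj : ∀ x y, G.Adj (f x) (f y) → H.Adj x y)
    (hH : H.IsAcyclic) : (G.induce (Set.range f)).IsAcyclic := by
  let e := Equiv.ofInjective f hf
  refine hH.comap ⟨e.symm, fun {a b} h => hadj _ _ ?_⟩ e.symm.injective
  simpa [e, Equiv.apply_ofInjective_symm] using h

lemma card_le_maxInducedForest {V : Type*} [Fintype V] {G : SimpleGraph V} {Y : Finset V}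
    (hY : (G.induce (Y : Set V)).IsAcyclic) : Y.card ≤ maxInducedForest G := by
  refine le_csSup ⟨Fintype.card V, ?_⟩ ⟨Y, rfl, hY⟩
  rintro k ⟨X, rfl, -⟩
  exact X.card_le_univ

lemma card_le_maxInducedForest_of_injective {V W : Type*} [Finite V] [Fintype W]
    {G : SimpleGraph V} {H : SimpleGraph W} {f : W → V} (hf : Function.Injective f)
    (hadj : ∀ x y, G.Adj (f x) (f y) → H.Adj x y) (hH : H.IsAcyclic) :
    Fintype.card W ≤ maxInducedForest G := by
  classical
  have := Fintype.ofFinite V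
  rw [← Finset.card_univ, ← Finset.card_image_of_injective _ hf]
  refine card_le_maxInducedForest ?_
  rw [Finset.coe_image, Finset.coe_univ, Set.image_univ]
  exact isAcyclic_induce_range hf hadj hH

theorem Fin.cons_const {α : Type*} {n : ℕ} (a : α) :
    (Fin.cons a fun _ : Fin n => a) = fun _ => a := by
  ext i
  cases i using Fin.cases <;> rfl

section SwapPair

variable {α : Type*} [DecidableEq α]

def swapPair (x y a b : α) : Equiv.Perm α :=
  Equiv.swap (Equiv.swap x a y) b * Equiv.swap x a

theorem swapPair_apply_left {x y a b : α} (hxy : x ≠ y) (hab : a ≠ b) :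
    swapPair x y a b x = a := by
  have hay : a ≠ Equiv.swap x a y := fun h =>
    hxy ((Equiv.swap x a).injective ((Equiv.swap_apply_left x a).trans h))
  simp [swapPair, Equiv.swap_apply_of_ne_of_ne hay hab]

theorem swapPair_apply_right (x y a b : α) : swapPair x y a b y = b := by
  simp [swapPair]

end SwapPair

section HamiltonianPath

variable {p n : ℕ}

theorem sierpinski_adj_iff_s16 {s s' : Fin n → Fin p} :
    (sierpinski p n).Adj s s' ↔
      ∃ m, (∀ k < m, s k = s' k) ∧ s m ≠ s' m ∧ ∀ k, m < k → s k = s' m ∧ s' k = s m := by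
  rw [sierpinski, fromRel_adj]
  constructor
  · rintro ⟨-, ⟨m, i, j, hij, hlt, rfl, rfl, hgt⟩ | ⟨m, i, j, hij, hlt, rfl, rfl, hgt⟩⟩
    · exact ⟨m, hlt, hij, hgt⟩
    · exact ⟨m, fun k hk => (hlt k hk).symm, hij.symm, fun k hk => (hgt k hk).symm⟩
  · rintro ⟨m, hlt, hne, hgt⟩
    exact ⟨fun h => hne (congrFun h m), Or.inl ⟨m, _, _, hne, hlt, rfl, rfl, hgt⟩⟩

theorem sierpinski_adj_cons {s s' : Fin n → Fin p} (c : Fin p) (h : (sierpinski p n).Adj s s') :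
    (sierpinski p (n + 1)).Adj (Fin.cons c s) (Fin.cons c s') := by
  obtain ⟨m, hlt, hne, hgt⟩ := sierpinski_adj_iff_s16.mp h
  refine sierpinski_adj_iff_s16.mpr ⟨m.succ, fun k hk => ?_, by simpa using hne, fun k hk => ?_⟩
  · cases k using Fin.cases with
    | zero => rfl
    | succ k => simpa using hlt k (Fin.succ_lt_succ_iff.mp hk)
  · cases k using Fin.cases with
    | zero => exact absurd hk (Fin.not_lt_zero _)
    | succ k => simpa using hgt k (Fin.succ_lt_succ_iff.mp hk)

theorem sierpinski_adj_cons_const {i j : Fin p} (h : i ≠ j) :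
    (sierpinski p (n + 1)).Adj (Fin.cons i fun _ => j) (Fin.cons j fun _ => i) := by
  refine sierpinski_adj_iff_s16.mpr ⟨0, fun k hk => absurd hk (Fin.not_lt_zero _), h, fun k hk => ?_⟩
  cases k using Fin.cases with
  | zero => exact absurd hk (lt_irrefl 0)
  | succ k => simp

structure IsSierpinskiHamPath (n : ℕ) (a b : Fin p) (f : ℕ → Fin n → Fin p) : Prop where
  apply_zero : f 0 = fun _ => a
  apply_last : f (p ^ n - 1) = fun _ => b
  injOn : Set.InjOn f (Set.Iio (p ^ n))
  adj : ∀ t, t + 1 < p ^ n → (sierpinski p n).Adj (f t) (f (t + 1))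

-- Copy `k` is traversed from `c (k - 1)` to `c (k + 1)`; truncated subtraction lets copy `0`
-- start at `c 0`, and `c p = c (p - 1)` lets the last copy end at `c (p - 1)`.
def blockPath (c : ℕ → Fin p) (g : Fin p → Fin p → ℕ → Fin n → Fin p) (t : ℕ) :
    Fin (n + 1) → Fin p :=
  Fin.cons (c (t / p ^ n)) (g (c (t / p ^ n - 1)) (c (t / p ^ n + 1)) (t % p ^ n))

theorem blockPath_apply (c : ℕ → Fin p) (g : Fin p → Fin p → ℕ → Fin n → Fin p) (k : ℕ)
    {r : ℕ} (hr : r < p ^ n) :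
    blockPath c g (p ^ n * k + r) = Fin.cons (c k) (g (c (k - 1)) (c (k + 1)) r) := by
  have hN : 0 < p ^ n := by omega
  simp only [blockPath, Nat.mul_add_div hN, Nat.mul_add_mod, Nat.div_eq_of_lt hr,
    Nat.mod_eq_of_lt hr, add_zero]

theorem apply_pred_ne_apply_succ (hp : 2 ≤ p) {c : ℕ → Fin p} (hc : Set.InjOn c (Set.Iio p))
    (hcp : c p = c (p - 1)) {k : ℕ} (hk : k < p) : c (k - 1) ≠ c (k + 1) := by
  intro h
  have hclamp : c (k + 1) = c (min (k + 1) (p - 1)) := by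
    rcases Nat.lt_or_ge (k + 1) p with h' | h'
    · rw [min_eq_left (by omega)]
    · rw [min_eq_right (by omega), show k + 1 = p by omega, hcp]
  have := hc (show k - 1 < p by omega) (show min (k + 1) (p - 1) < p by omega) (h.trans hclamp)
  omega

theorem isSierpinskiHamPath_blockPath (hp : 2 ≤ p) {c : ℕ → Fin p}
    (hc : Set.InjOn c (Set.Iio p)) (hcp : c p = c (p - 1))
    {g : Fin p → Fin p → ℕ → Fin n → Fin p}
    (hg : ∀ x y, x ≠ y → IsSierpinskiHamPath n x y (g x y)) :
    IsSierpinskiHamPath (n + 1) (c 0) (c (p - 1)) (blockPath c g) := by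
  have hN : 0 < p ^ n := by positivity
  have hpow : p ^ (n + 1) = p ^ n * p := pow_succ p n
  have hc_ne : ∀ k < p, c (k - 1) ≠ c (k + 1) := fun k hk => apply_pred_ne_apply_succ hp hc hcp hk
  have hdecomp : ∀ t, p ^ n * (t / p ^ n) + t % p ^ n = t := fun t => Nat.div_add_mod t _
  have hblock : ∀ t < p ^ (n + 1), t / p ^ n < p := fun t ht =>
    Nat.div_lt_of_lt_mul (by rwa [← hpow])
  constructor
  · have h0 := blockPath_apply c g 0 hN
    rw [mul_zero, zero_add] at h0
    rw [h0, (hg _ _ (hc_ne 0 (by omega))).apply_zero, Nat.zero_sub, Fin.cons_const]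
  · have hlast := blockPath_apply c g (p - 1) (Nat.sub_lt hN one_pos)
    rw [show p ^ n * (p - 1) + (p ^ n - 1) = p ^ (n + 1) - 1 by
      have := Nat.le_mul_of_pos_right (p ^ n) (by omega : 0 < p)
      rw [hpow, Nat.mul_sub_one]; omega] at hlast
    rw [hlast, (hg _ _ (hc_ne (p - 1) (by omega))).apply_last, Nat.sub_add_cancel (by omega), hcp,
      Fin.cons_const]
  · intro t ht t' ht' h
    obtain ⟨hk, hr⟩ := Fin.cons_inj.mp h
    have hk' := hc (hblock t ht) (hblock t' ht') hk
    rw [hk'] at hr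
    have hr' := (hg _ _ (hc_ne _ (hblock t' ht'))).injOn (Nat.mod_lt t hN) (Nat.mod_lt t' hN) hr
    rw [← hdecomp t, ← hdecomp t', hk', hr']
  · intro t ht
    obtain ⟨k, r, hr, rfl⟩ : ∃ k r, r < p ^ n ∧ p ^ n * k + r = t :=
      ⟨_, _, Nat.mod_lt t hN, hdecomp t⟩
    rcases Nat.lt_or_ge (r + 1) (p ^ n) with hr1 | hr1
    · have hk : k < p := Nat.lt_of_mul_lt_mul_left (a := p ^ n) (by rw [← hpow]; omega)
      rw [add_assoc, blockPath_apply c g k hr, blockPath_apply c g k hr1]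
      exact sierpinski_adj_cons _ ((hg _ _ (hc_ne k hk)).adj r hr1)
    · obtain rfl : r = p ^ n - 1 := by omega
      have hnext : p ^ n * k + (p ^ n - 1) + 1 = p ^ n * (k + 1) + 0 := by
        rw [mul_add]; omega
      have hk1 : k + 1 < p := Nat.lt_of_mul_lt_mul_left (a := p ^ n) (by rw [← hpow]; omega)
      rw [hnext, blockPath_apply c g k hr, blockPath_apply c g (k + 1) hN,
        (hg _ _ (hc_ne k (by omega))).apply_last, (hg _ _ (hc_ne (k + 1) hk1)).apply_zero,
        Nat.add_sub_cancel]
      exact sierpinski_adj_cons_const fun h =>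
        absurd (hc (show k < p by omega) (show k + 1 < p from hk1) h) (by omega)

end HamiltonianPath

def clampFin (p : ℕ) [NeZero p] (k : ℕ) : Fin p :=
  ⟨min k (p - 1), by have := NeZero.pos p; omega⟩

section HamPathConstruction

variable {p : ℕ} [NeZero p]

def copyOrder (a b : Fin p) (k : ℕ) : Fin p :=
  swapPair (clampFin p 0) (clampFin p (p - 1)) a b (clampFin p k)

theorem copyOrder_zero (hp : 2 ≤ p) {a b : Fin p} (hab : a ≠ b) : copyOrder a b 0 = a :=
  swapPair_apply_left (Fin.ne_of_val_ne (show min 0 (p - 1) ≠ min (p - 1) (p - 1) by omega)) hab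

theorem copyOrder_sub_one (a b : Fin p) : copyOrder a b (p - 1) = b :=
  swapPair_apply_right _ _ _ _

theorem copyOrder_self (a b : Fin p) : copyOrder a b p = copyOrder a b (p - 1) := by
  simp [copyOrder, clampFin]

theorem injOn_copyOrder (a b : Fin p) : Set.InjOn (copyOrder a b) (Set.Iio p) := by
  intro k hk k' hk' h
  have := Fin.ext_iff.mp ((Equiv.injective _) h)
  simp only [clampFin, Set.mem_Iio] at this hk hk'
  omega

def hamPath : (n : ℕ) → Fin p → Fin p → ℕ → Fin n → Fin p
  | 0, _, _ => fun _ => Fin.elim0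
  | n + 1, a, b => blockPath (copyOrder a b) (hamPath n)

theorem isSierpinskiHamPath_hamPath (hp : 2 ≤ p) (n : ℕ) {a b : Fin p} (hab : a ≠ b) :
    IsSierpinskiHamPath n a b (hamPath n a b) := by
  induction n generalizing a b with
  | zero =>
    refine ⟨funext fun i => i.elim0, funext fun i => i.elim0, fun t ht t' ht' _ => ?_,
      fun t ht => ?_⟩
    · simp only [pow_zero, Set.mem_Iio] at ht ht'
      omega
    · simp at ht
  | succ n ih =>
    have := isSierpinskiHamPath_blockPath hp (injOn_copyOrder a b) (copyOrder_self a b)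
      fun x y hxy => ih hxy
    rwa [copyOrder_zero hp hab, copyOrder_sub_one] at this

end HamPathConstruction

section Contraction

variable {p n : ℕ}

theorem nonCliqueRel_symm {u v : Fin (n + 1) → Fin p} (h : nonCliqueRel p n u v) :
    nonCliqueRel p n v u := by
  obtain ⟨t, ht, i, j, hij, hlt, hu, hv, hgt⟩ := h
  exact ⟨t, ht, j, i, hij.symm, fun k hk => (hlt k hk).symm, hv, hu, fun k hk => (hgt k hk).symm⟩

theorem nonCliqueRel_right_unique {u v w : Fin (n + 1) → Fin p} (h : nonCliqueRel p n u v)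
    (h' : nonCliqueRel p n u w) : v = w := by
  obtain ⟨t, ht, i, j, hij, hlt, hu, hv, hgt⟩ := h
  obtain ⟨t', ht', i', j', hij', hlt', hu', hw, hgt'⟩ := h'
  have hjj : j = j' := by
    have hlast : ∀ s : Fin (n + 1), (s : ℕ) < n → s < Fin.last n := fun s hs => by
      simp [Fin.lt_def, hs]
    exact ((hgt _ (hlast t ht)).1).symm.trans (hgt' _ (hlast t' ht')).1
  obtain rfl : t = t' := by
    rcases lt_trichotomy t t' with htt | rfl | htt
    · exact absurd (hu'.symm.trans ((hgt t' htt).1.trans hjj)) hij'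
    · rfl
    · exact absurd (hu.symm.trans ((hgt' t htt).1.trans hjj.symm)) hij
  have hii : i = i' := hu.symm.trans hu'
  funext k
  rcases lt_trichotomy k t with hk | rfl | hk
  · rw [← hlt k hk, ← hlt' k hk]
  · rw [hv, hw, hjj]
  · rw [(hgt k hk).2, (hgt' k hk).2, hii]

theorem triSetoid_mk_eq_iff {u v : Fin (n + 1) → Fin p} :
    Quotient.mk (triSetoid p n) u = Quotient.mk (triSetoid p n) v ↔
      u = v ∨ nonCliqueRel p n u v := by
  refine ⟨fun h => ?_, ?_⟩
  · have h' : Relation.EqvGen (nonCliqueRel p n) u v := Quotient.exact h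
    clear h
    induction h' with
    | rel x y hxy => exact Or.inr hxy
    | refl x => exact Or.inl rfl
    | symm x y _ ih => exact ih.imp Eq.symm nonCliqueRel_symm
    | trans x y z _ _ ih₁ ih₂ =>
      rcases ih₁ with rfl | h₁ <;> rcases ih₂ with rfl | h₂
      · exact Or.inl rfl
      · exact Or.inr h₂
      · exact Or.inr h₁
      · exact Or.inl (nonCliqueRel_right_unique (nonCliqueRel_symm h₁) h₂)
  · rintro (rfl | h)
    · rfl
    · exact Quotient.sound (Relation.EqvGen.rel _ _ h)

theorem sierpinski_succ_adj {u v : Fin (n + 1) → Fin p} (h : (sierpinski p (n + 1)).Adj u v) :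
    nonCliqueRel p n u v ∨ Fin.init u = Fin.init v := by
  obtain ⟨m, hlt, hne, hgt⟩ := sierpinski_adj_iff_s16.mp h
  cases m using Fin.lastCases with
  | last => exact Or.inr (funext fun k => hlt _ (Fin.castSucc_lt_last k))
  | cast m => exact Or.inl ⟨m.castSucc, m.isLt, _, _, hne, hlt, rfl, rfl, hgt⟩

end Contraction

section EdgeClass

variable {p n : ℕ} [NeZero p]

def firstDiffLetter (s s' : Fin n → Fin p) : Fin p :=
  if h : ∃ k, s k ≠ s' k then s' (Fin.find (fun k => s k ≠ s' k) h) else 0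

theorem firstDiffLetter_eq {s s' : Fin n → Fin p} {m : Fin n} (hlt : ∀ k < m, s k = s' k)
    (hne : s m ≠ s' m) : firstDiffLetter s s' = s' m := by
  have hex : ∃ k, s k ≠ s' k := ⟨m, hne⟩
  rw [firstDiffLetter, dif_pos hex,
    (Fin.find_eq_iff hex).mpr ⟨hne, fun k hk h => h (hlt k hk)⟩]

-- `snocDiff (w i j^l) (w j i^l) = w i j^(l+1)`
def snocDiff (s s' : Fin n → Fin p) : Fin (n + 1) → Fin p :=
  Fin.snoc s (firstDiffLetter s s')

theorem nonCliqueRel_snocDiff {s s' : Fin n → Fin p} (h : (sierpinski p n).Adj s s') :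
    nonCliqueRel p n (snocDiff s s') (snocDiff s' s) := by
  obtain ⟨m, hlt, hne, hgt⟩ := sierpinski_adj_iff_s16.mp h
  have hlt' : ∀ k < m, s' k = s k := fun k hk => (hlt k hk).symm
  refine ⟨m.castSucc, m.isLt, s m, s' m, hne, fun k hk => ?_, by simp [snocDiff],
    by simp [snocDiff], fun k hk => ?_⟩
  · cases k using Fin.lastCases with
    | last => exact absurd hk (Fin.castSucc_lt_last m).not_gt
    | cast k => simpa [snocDiff] using hlt k (Fin.castSucc_lt_castSucc_iff.mp hk)
  · cases k using Fin.lastCases with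
    | last => simp [snocDiff, firstDiffLetter_eq hlt hne, firstDiffLetter_eq hlt' (Ne.symm hne)]
    | cast k => simpa [snocDiff] using hgt k (Fin.castSucc_lt_castSucc_iff.mp hk)

def edgeClass (s s' : Fin n → Fin p) : Quotient (triSetoid p n) :=
  Quotient.mk _ (snocDiff s s')

theorem edgeClass_comm {s s' : Fin n → Fin p} (h : (sierpinski p n).Adj s s') :
    edgeClass s s' = edgeClass s' s :=
  Quotient.sound (Relation.EqvGen.rel _ _ (nonCliqueRel_snocDiff h))

theorem init_eq_of_mk_eq_edgeClass {s s' : Fin n → Fin p} {u : Fin (n + 1) → Fin p}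
    (h : (sierpinski p n).Adj s s') (hu : Quotient.mk _ u = edgeClass s s') :
    Fin.init u = s ∨ Fin.init u = s' := by
  rcases triSetoid_mk_eq_iff.mp hu with rfl | hrel
  · exact Or.inl (Fin.init_snoc _ _)
  · obtain rfl : u = snocDiff s' s := nonCliqueRel_right_unique (nonCliqueRel_symm hrel)
      (nonCliqueRel_snocDiff h)
    exact Or.inr (Fin.init_snoc _ _)

theorem eq_of_edgeClass_eq {s s' r r' : Fin n → Fin p} (h : (sierpinski p n).Adj s s')
    (h' : (sierpinski p n).Adj r r') (he : edgeClass s s' = edgeClass r r') :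
    (s = r ∨ s = r') ∧ (s' = r ∨ s' = r') := by
  constructor
  · simpa [snocDiff] using init_eq_of_mk_eq_edgeClass h' he
  · simpa [snocDiff] using init_eq_of_mk_eq_edgeClass h' ((edgeClass_comm h).symm.trans he)

theorem exists_eq_of_adj_edgeClass {s s' r r' : Fin n → Fin p} (h : (sierpinski p n).Adj s s')
    (h' : (sierpinski p n).Adj r r')
    (hadj : (sierpinskiTriangle p n).Adj (edgeClass s s') (edgeClass r r')) :
    ∃ x, (x = s ∨ x = s') ∧ (x = r ∨ x = r') := by
  obtain ⟨hne, u, v, hu, hv, huv⟩ := hadj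
  rcases sierpinski_succ_adj huv with hrel | hinit
  · exact absurd (hu.symm.trans ((triSetoid_mk_eq_iff.mpr (Or.inr hrel)).trans hv)) hne
  · exact ⟨Fin.init u, init_eq_of_mk_eq_edgeClass h hu,
      hinit ▸ init_eq_of_mk_eq_edgeClass h' hv⟩

end EdgeClass

theorem sub_one_le_maxInducedForest_sierpinskiTriangle {p n N : ℕ} [NeZero p]
    {s : ℕ → Fin n → Fin p} (hinj : Set.InjOn s (Set.Iio N))
    (hadj : ∀ t, t + 1 < N → (sierpinski p n).Adj (s t) (s (t + 1))) :
    N - 1 ≤ maxInducedForest (sierpinskiTriangle p n) := by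
  have hs : ∀ i j, i < N → j < N → (s i = s j ↔ i = j) := fun i j hi hj => hinj.eq_iff hi hj
  let f : Fin (N - 1) → Quotient (triSetoid p n) := fun t => edgeClass (s t) (s (t + 1))
  have hf : ∀ t : Fin (N - 1), (sierpinski p n).Adj (s t) (s (t + 1)) := fun t => hadj t (by omega)
  have hinj_f : Function.Injective f := by
    intro t t' he
    have := eq_of_edgeClass_eq (hf t) (hf t') he
    simp (disch := omega) only [hs] at this
    omega
  have hadj_f : ∀ t t', (sierpinskiTriangle p n).Adj (f t) (f t') →
      (pathGraph (N - 1)).Adj t t' := by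
    intro t t' hadj'
    obtain ⟨x, hx, hx'⟩ := exists_eq_of_adj_edgeClass (hf t) (hf t') hadj'
    have hne : (t : ℕ) ≠ t' := fun h => hadj'.ne (congrArg f (Fin.ext h))
    rw [pathGraph_adj]
    rcases hx with rfl | rfl <;> simp (disch := omega) only [hs] at hx' <;> omega
  simpa using card_le_maxInducedForest_of_injective hinj_f hadj_f (isAcyclic_pathGraph _)

theorem stmt16_general (p n : Nat) (hp : 5 ≤ p) (hn : 3 ≤ n) :
    (p : ℚ) ^ n - ((p : ℚ) ^ (n - 1) + (p : ℚ) ^ (n - 2) - 5 * (p : ℚ) + 3) / 8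
      ≤ (maxInducedForest (sierpinskiTriangle p n) : ℚ) := by
  have : NeZero p := ⟨by omega⟩
  have hpath := isSierpinskiHamPath_hamPath (p := p) (by omega) n
    (a := ⟨0, by omega⟩) (b := ⟨1, by omega⟩) (by simp)
  have hforest := sub_one_le_maxInducedForest_sierpinskiTriangle hpath.injOn hpath.adj
  have hq : (5 : ℚ) ≤ p := by exact_mod_cast hp
  have h1 : (p : ℚ) ^ 2 ≤ (p : ℚ) ^ (n - 1) := pow_le_pow_right₀ (by linarith) (by omega)
  have h2 : (p : ℚ) ^ 1 ≤ (p : ℚ) ^ (n - 2) := pow_le_pow_right₀ (by linarith) (by omega)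
  calc (p : ℚ) ^ n - ((p : ℚ) ^ (n - 1) + (p : ℚ) ^ (n - 2) - 5 * (p : ℚ) + 3) / 8
      ≤ (p : ℚ) ^ n - 1 := by nlinarith
    _ = ((p ^ n - 1 : ℕ) : ℚ) := by
      rw [Nat.cast_sub (Nat.one_le_pow n p (by omega))]
      push_cast
      ring
    _ ≤ _ := by exact_mod_cast hforest

theorem stmt16 (p n : Nat) (hp : 5 ≤ p) (hpo : Odd p) (hn : 3 ≤ n) :
    (p : ℚ) ^ n - ((p : ℚ) ^ (n - 1) + (p : ℚ) ^ (n - 2) - 5 * (p : ℚ) + 3) / 8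
      ≤ (maxInducedForest (sierpinskiTriangle p n) : ℚ) :=
  stmt16_general p n hp hn
end
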